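/- Let S be the clone of self-dual Boolean functions. For Boolean functions f, g define Im^[2](f) = { {f(a), f(ā)} : a in the domain of f }, where ā denotes the componentwise complement. Then f ≤_S g if and only if Im^[2](f) ⊆ Im^[2](g), and there are exactly 7 S-equivalence classes. -/

import Mathlib

/-!
An inner tuple of self-dual operations maps each complementary pair `{a, ā}` to a complementary
pair, so `Im2` can only shrink when passing to an `S`-minor. Conversely, if `Im2 f ⊆ Im2 g`, then
for every `a` some `b` has `(g b, g b̄) = (f a, f ā)`; choosing `b` freely where `a 0 = 0` and
complementing elsewhere makes `a ↦ b` a tuple of self-dual operations.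

Hence the `S`-classes are the fibres of `Im2`. Its values are exactly the nonempty families of
nonempty subsets of `{0, 1}`: unary operations realise each one-element family, and a selector
that feeds complementary pairs to `f` or to `g` realises `Im2 f ∪ Im2 g`. There are `2 ^ 3 - 1 = 7`
such families.
-/

/-- An `n`-indexed operation on `A` has arity `n + 1` (so arities are ≥ 1). -/
abbrev Op (A : Type) (n : ℕ) := (Fin (n + 1) → A) → A

/-- A clone on `A`: a set of finitary operations containing all projections
and closed under composition. -/
structure Clone (A : Type) where
  ops : ∀ n : ℕ, Set (Op A n)
  proj_mem : ∀ (n : ℕ) (i : Fin (n + 1)), (fun x => x i) ∈ ops n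
  comp_mem : ∀ {m n : ℕ} (g : Op A m) (h : Fin (m + 1) → Op A n),
      g ∈ ops m → (∀ i, h i ∈ ops n) → (fun x => g fun i => h i x) ∈ ops n

/-- The set `O_A` of all finitary operations on `A`, of all arities. -/
def Ops (A : Type) := Σ n : ℕ, Op A n

/-- `Minor C f g` : `f` is a `C`-minor of `g`, i.e. `f = g ∘ h` for a tuple `h`
of operations from `C`. -/
def Minor {A : Type} (C : Clone A) (f g : Ops A) : Prop :=
  ∃ h : Fin (g.1 + 1) → Op A f.1,
    (∀ i, h i ∈ C.ops f.1) ∧ f.2 = fun x => g.2 fun i => h i x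

/-- `C`-equivalence: each of `f`, `g` is a `C`-minor of the other. -/
def CEquiv {A : Type} (C : Clone A) (f g : Ops A) : Prop :=
  Minor C f g ∧ Minor C g f

/-- `Im^[2](f)`: the collection of sets `{f(a), f(ā)}` where `ā` is the
componentwise complement of `a`. -/
def Im2 (f : Ops (Fin 2)) : Set (Set (Fin 2)) :=
  {s | ∃ a : Fin (f.1 + 1) → Fin 2, s = {f.2 a, f.2 (fun i => a i + 1)}}

lemma Fin.add_one_add_one (a : Fin 2) : a + 1 + 1 = a := by
  simp [add_assoc]

def IsSelfDual {n : ℕ} (h : Op (Fin 2) n) : Prop :=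
  ∀ x, h (fun i => x i + 1) = h x + 1

def selfDualize {m n : ℕ} (c : (Fin (n + 1) → Fin 2) → Fin (m + 1) → Fin 2) :
    Fin (m + 1) → Op (Fin 2) n :=
  fun i x => if x 0 = 0 then c x i else c (fun j => x j + 1) i + 1

lemma isSelfDual_selfDualize {m n : ℕ} (c : (Fin (n + 1) → Fin 2) → Fin (m + 1) → Fin 2)
    (i : Fin (m + 1)) : IsSelfDual (selfDualize c i) := by
  intro x
  rcases Fin.exists_fin_two.mp ⟨x 0, rfl⟩ with h | h <;> simp [selfDualize, h, Fin.add_one_add_one]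

section Minor

variable {f g : Ops (Fin 2)}

lemma im2_subset_of_eq_comp {h : Fin (g.1 + 1) → Op (Fin 2) f.1} (hh : ∀ i, IsSelfDual (h i))
    (hf : f.2 = fun x => g.2 fun i => h i x) : Im2 f ⊆ Im2 g := by
  rintro s ⟨a, rfl⟩
  refine ⟨fun i => h i a, ?_⟩
  simp only [IsSelfDual] at hh
  simp only [hf, hh]

lemma exists_eq_and_eq_compl_of_im2_subset (hfg : Im2 f ⊆ Im2 g) (x : Fin (f.1 + 1) → Fin 2) :
    ∃ b, g.2 b = f.2 x ∧ g.2 (fun i => b i + 1) = f.2 (fun i => x i + 1) := by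
  obtain ⟨b, hb⟩ := hfg ⟨x, rfl⟩
  rcases Set.pair_eq_pair_iff.mp hb with ⟨h₁, h₂⟩ | ⟨h₁, h₂⟩
  · exact ⟨b, h₁.symm, h₂.symm⟩
  · refine ⟨fun i => b i + 1, h₁.symm, ?_⟩
    simpa only [Fin.add_one_add_one] using h₂.symm

lemma exists_isSelfDual_eq_comp_of_im2_subset (hfg : Im2 f ⊆ Im2 g) :
    ∃ h : Fin (g.1 + 1) → Op (Fin 2) f.1,
      (∀ i, IsSelfDual (h i)) ∧ f.2 = fun x => g.2 fun i => h i x := by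
  choose c hc hc' using exists_eq_and_eq_compl_of_im2_subset hfg
  refine ⟨selfDualize c, isSelfDual_selfDualize c, funext fun x => ?_⟩
  rcases Fin.exists_fin_two.mp ⟨x 0, rfl⟩ with h | h
  · simp [selfDualize, h, hc]
  · simpa [selfDualize, h, Fin.add_one_add_one] using (hc' fun j => x j + 1).symm

end Minor

lemma minor_iff_im2_subset {S : Clone (Fin 2)} (hS : ∀ n, S.ops n = {h | IsSelfDual h})
    (f g : Ops (Fin 2)) : Minor S f g ↔ Im2 f ⊆ Im2 g := by
  simp only [Minor, hS, Set.mem_ofPred_eq]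
  exact ⟨fun ⟨_, hh, hf⟩ => im2_subset_of_eq_comp hh hf, exists_isSelfDual_eq_comp_of_im2_subset⟩

def pairOp (u v : Fin 2) : Ops (Fin 2) := ⟨0, fun x => ![u, v] (x 0)⟩

lemma im2_pairOp (u v : Fin 2) : Im2 (pairOp u v) = {{u, v}} := by
  ext s
  simp only [Im2, pairOp, Set.mem_ofPred_eq, Set.mem_singleton_iff]
  constructor
  · rintro ⟨a, rfl⟩
    rcases Fin.exists_fin_two.mp ⟨a 0, rfl⟩ with h | h <;> simp [h, Set.pair_comm]
  · rintro rfl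
    exact ⟨fun _ => 0, by simp⟩

/-- The inputs are split into a block for `f` and a block for `g`. Comparing the first entries of
the two blocks is invariant under complementation, so each complementary pair of inputs is handed
to `f` or to `g` as a whole. -/
def Ops.join (f g : Ops (Fin 2)) : Ops (Fin 2) :=
  ⟨f.1 + 1 + g.1, fun x : Fin ((f.1 + 1) + (g.1 + 1)) → Fin 2 =>
    if x (Fin.castAdd _ 0) = x (Fin.natAdd _ 0) then f.2 fun i => x (Fin.castAdd _ i)
    else g.2 fun j => x (Fin.natAdd _ j)⟩

lemma im2_join (f g : Ops (Fin 2)) : Im2 (f.join g) = Im2 f ∪ Im2 g := by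
  ext s
  constructor
  · rintro ⟨x : Fin ((f.1 + 1) + (g.1 + 1)) → Fin 2, rfl⟩
    by_cases hx : x (Fin.castAdd _ 0) = x (Fin.natAdd _ 0)
    · exact Or.inl ⟨fun i => x (Fin.castAdd _ i), by simp [Ops.join, hx]⟩
    · exact Or.inr ⟨fun j => x (Fin.natAdd _ j), by simp [Ops.join, hx]⟩
  · rintro (⟨a, rfl⟩ | ⟨b, rfl⟩)
    · exact ⟨(Fin.append a fun _ => a 0 : Fin ((f.1 + 1) + (g.1 + 1)) → Fin 2),
        by simp [Ops.join]⟩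
    · exact ⟨(Fin.append (fun _ => b 0 + 1) b : Fin ((f.1 + 1) + (g.1 + 1)) → Fin 2),
        by simp [Ops.join]⟩

lemma im2_mem_powerset_compl_empty_diff (f : Ops (Fin 2)) : Im2 f ∈ 𝒫 {∅}ᶜ \ {∅} := by
  refine ⟨?_, Set.nonempty_iff_ne_empty.mp ⟨_, fun _ => 0, rfl⟩⟩
  rintro s ⟨a, rfl⟩
  exact (Set.insert_nonempty _ _).ne_empty

lemma Fin.exists_eq_pair_of_nonempty (s : Set (Fin 2)) (hs : s.Nonempty) :
    ∃ u v : Fin 2, s = {u, v} := by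
  obtain ⟨t, rfl⟩ := s.toFinite.exists_finset_coe
  have finset_eq_pair : ∀ t : Finset (Fin 2), t.Nonempty → ∃ u v : Fin 2, t = {u, v} := by decide
  obtain ⟨u, v, rfl⟩ := finset_eq_pair t (Finset.coe_nonempty.mp hs)
  exact ⟨u, v, Finset.coe_pair⟩

lemma range_im2 : Set.range Im2 = 𝒫 {∅}ᶜ \ {∅} := by
  refine subset_antisymm (Set.range_subset_iff.mpr im2_mem_powerset_compl_empty_diff) ?_
  rintro R ⟨hR, hne⟩
  induction R, R.toFinite using Set.Finite.induction_on with
  | empty => exact absurd rfl hne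
  | @insert s R _ _ ih =>
    obtain ⟨u, v, rfl⟩ := Fin.exists_eq_pair_of_nonempty s
      (Set.nonempty_iff_ne_empty.mpr (hR (Set.mem_insert s R)))
    rcases R.eq_empty_or_nonempty with rfl | hR'
    · exact ⟨pairOp u v, by simp [im2_pairOp]⟩
    · obtain ⟨f, hf⟩ := ih (fun t ht => hR (Set.mem_insert_of_mem _ ht)) hR'.ne_empty
      exact ⟨(pairOp u v).join f, by rw [im2_join, hf, im2_pairOp, Set.singleton_union]⟩

lemma ncard_powerset_compl_empty_diff (α : Type*) [Fintype α] :
    (𝒫 {∅}ᶜ \ {∅} : Set (Set (Set α))).ncard = 2 ^ (2 ^ Fintype.card α - 1) - 1 := by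
  rw [Set.ncard_sdiff_singleton_of_mem (Set.empty_subset _), Set.ncard_powerset,
    Set.ncard_compl, Set.ncard_singleton, Nat.card_eq_fintype_card, Fintype.card_set]

theorem selfdual_minor_description {S : Clone (Fin 2)}
    (hS : ∀ n, S.ops n =
      {f : Op (Fin 2) n | ∀ x, f (fun i => x i + 1) = f x + 1}) :
    (∀ f g : Ops (Fin 2), Minor S f g ↔ Im2 f ⊆ Im2 g) ∧
    Nat.card (Quot (CEquiv S)) = 7 := by
  have hminor := minor_iff_im2_subset hS
  have hequiv : CEquiv S = fun f g => Im2 f = Im2 g := by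
    funext f g
    simp only [CEquiv, hminor, subset_antisymm_iff]
  refine ⟨hminor, ?_⟩
  rw [hequiv]
  refine (Nat.card_congr (Setoid.quotientKerEquivRange Im2)).trans ?_
  rw [range_im2, Nat.card_coe_set_eq, ncard_powerset_compl_empty_diff, Fintype.card_fin]
  rfl
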